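/- For each integer d ≥ 0, the function E_d(s) is Lipschitz continuous on (0,∞) with Lipschitz constant 1. -/

import Mathlib

open Finset

/-- `E d s = ∑_{i=0}^{⌊s⌋} ((-1)^i / d!) * C(d,i) * (s - i)^d`. -/
noncomputable def E (d : ℕ) (s : ℝ) : ℝ :=
  ∑ i ∈ Finset.range (⌊s⌋.toNat + 1),
    ((-1 : ℝ) ^ i / d.factorial) * (d.choose i : ℝ) * (s - i) ^ d

/-!
For `d ≥ 1` and `s ≥ 0`, `E d s` is the Irwin–Hall distribution function
`(1/d!) ∑_{i ≤ d} (-1)^i C(d,i) (s - i)₊^d` of a sum of `d` independent uniform variables on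
`[0,1]`, which makes sense for all real `s`. The derivative of `E_{d+1}` is the density
`E_d(s) - E_d(s - 1)`, so by induction on `d` this density lies in `[0,1]`: both `E_d` and
`s ↦ s - E_d(s)` are monotone, starting from `E_1(s) = min (max s 0) 1`. Finally `E_0 ≡ 1`.
-/

open Nat Set

/-- Pascal's rule in summed form: the `(d+1)`-st alternating difference is the `d`-th one of the
first differences. -/
theorem alternating_sum_range_choose_succ_mul {R : Type*} [CommRing R] (d : ℕ) (a : ℕ → R) :
    ∑ i ∈ range (d + 2), (-1) ^ i * ((d + 1).choose i : R) * a i =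
      ∑ i ∈ range (d + 1), (-1) ^ i * (d.choose i : R) * (a i - a (i + 1)) := by
  have hshift := sum_range_succ' (fun i => (-1) ^ i * (d.choose i : R) * a i) (d + 1)
  rw [sum_range_succ _ (d + 1), choose_succ_self, cast_zero, mul_zero, zero_mul, add_zero] at hshift
  simp only [mul_sub, sum_sub_distrib, hshift, sum_range_succ' _ (d + 1), choose_succ_succ,
    cast_add, mul_add, add_mul, sum_add_distrib, pow_succ, mul_neg_one, neg_mul, sum_neg_distrib,
    choose_zero_right]
  ring

theorem hasDerivAt_max_zero_pow_succ {n : ℕ} (hn : n ≠ 0) (x : ℝ) :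
    HasDerivAt (fun y : ℝ => max y 0 ^ (n + 1)) ((n + 1) * max x 0 ^ n) x := by
  rcases lt_trichotomy x 0 with hx | rfl | hx
  · have hzero : (fun y : ℝ => max y 0 ^ (n + 1)) =ᶠ[nhds x] fun _ => 0 := by
      filter_upwards [Iio_mem_nhds hx] with y hy
      simp [max_eq_right (mem_Iio.1 hy).le]
    simpa [max_eq_right hx.le, hn] using (hasDerivAt_const x (0 : ℝ)).congr_of_eventuallyEq hzero
  · have hleft : HasDerivWithinAt (fun y : ℝ => max y 0 ^ (n + 1)) 0 (Iic 0) 0 :=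
      (hasDerivWithinAt_const 0 _ 0).congr (fun y hy => by simp [max_eq_right (mem_Iic.1 hy)])
        (by simp)
    have hright : HasDerivWithinAt (fun y : ℝ => max y 0 ^ (n + 1)) 0 (Ici 0) 0 := by
      simpa [hn] using ((hasDerivAt_pow (n + 1) (0 : ℝ)).hasDerivWithinAt (s := Ici 0)).congr
        (fun y hy => by simp [max_eq_left (mem_Ici.1 hy)]) (by simp)
    simpa [hn, Iic_union_Ici] using hleft.union hright
  · have hpow : (fun y : ℝ => max y 0 ^ (n + 1)) =ᶠ[nhds x] fun y => y ^ (n + 1) := by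
      filter_upwards [Ioi_mem_nhds hx] with y hy
      simp [max_eq_left (mem_Ioi.1 hy).le]
    simpa [max_eq_left hx.le] using (hasDerivAt_pow (n + 1) x).congr_of_eventuallyEq hpow

noncomputable def irwinHall (d : ℕ) (s : ℝ) : ℝ :=
  ∑ i ∈ range (d + 1), ((-1 : ℝ) ^ i / d !) * (d.choose i : ℝ) * max (s - i) 0 ^ d

theorem hasDerivAt_irwinHall_succ {d : ℕ} (hd : d ≠ 0) (s : ℝ) :
    HasDerivAt (irwinHall (d + 1)) (irwinHall d s - irwinHall d (s - 1)) s := by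
  have hterm (i : ℕ) : HasDerivAt
      (fun s : ℝ => ((-1 : ℝ) ^ i / (d + 1)!) * ((d + 1).choose i : ℝ) * max (s - i) 0 ^ (d + 1))
      ((-1) ^ i * ((d + 1).choose i : ℝ) * (max (s - i) 0 ^ d / d !)) s := by
    refine (((hasDerivAt_max_zero_pow_succ hd (s - i)).comp s
      ((hasDerivAt_id s).sub_const (i : ℝ))).const_mul
      (((-1 : ℝ) ^ i / (d + 1)!) * ((d + 1).choose i : ℝ))).congr_deriv ?_
    push_cast [factorial_succ]
    field_simp
  refine (HasDerivAt.fun_sum fun i _ => hterm i).congr_deriv ?_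
  rw [alternating_sum_range_choose_succ_mul, irwinHall, irwinHall, ← sum_sub_distrib]
  refine sum_congr rfl fun i _ => ?_
  rw [cast_succ, sub_sub s 1, add_comm 1]
  ring

theorem irwinHall_one (s : ℝ) : irwinHall 1 s = max s 0 - max (s - 1) 0 := by
  norm_num [irwinHall, sum_range_succ, sub_eq_add_neg]

theorem monotone_irwinHall_and_monotone_id_sub {d : ℕ} (hd : d ≠ 0) :
    Monotone (irwinHall d) ∧ Monotone fun s => s - irwinHall d s := by
  induction d with
  | zero => exact absurd rfl hd
  | succ d ih =>
    rcases eq_or_ne d 0 with rfl | hd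
    · refine ⟨fun a b hab => ?_, fun a b hab => ?_⟩ <;>
        simp only [zero_add, irwinHall_one, max_def] <;> split_ifs <;> linarith
    · obtain ⟨hmono, hmono_sub⟩ := ih hd
      have hderiv := hasDerivAt_irwinHall_succ hd
      refine ⟨monotone_of_hasDerivAt_nonneg hderiv fun s => ?_,
        monotone_of_hasDerivAt_nonneg (f' := fun s => 1 - (irwinHall d s - irwinHall d (s - 1)))
          (fun s => (hasDerivAt_id s).sub (hderiv s)) fun s => ?_⟩
      · exact sub_nonneg.2 (hmono (sub_le_self s zero_le_one))
      · have h := hmono_sub (sub_le_self s zero_le_one)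
        dsimp only [Pi.zero_apply] at h ⊢
        linarith

theorem abs_sub_le_of_monotone_of_monotone_id_sub {f : ℝ → ℝ} (hf : Monotone f)
    (hf' : Monotone fun s => s - f s) (s s' : ℝ) : |f s - f s'| ≤ |s - s'| := by
  wlog h : s' ≤ s generalizing s s'
  · rw [abs_sub_comm, abs_sub_comm s]
    exact this s' s (le_of_not_ge h)
  rw [abs_of_nonneg (sub_nonneg.2 (hf h)), abs_of_nonneg (sub_nonneg.2 h)]
  linarith [hf' h]

theorem E_eq_irwinHall {d : ℕ} (hd : d ≠ 0) {s : ℝ} (hs : 0 ≤ s) : E d s = irwinHall d s := by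
  set T : ℕ → ℝ := fun i => ((-1 : ℝ) ^ i / d !) * (d.choose i : ℝ) * max (s - i) 0 ^ d
  have hE : E d s = ∑ i ∈ range (⌊s⌋₊ + 1), T i := by
    rw [E, Int.floor_toNat]
    refine sum_congr rfl fun i hi => ?_
    have hi : (i : ℝ) ≤ s :=
      (Nat.cast_le.2 (Nat.lt_succ_iff.1 (mem_range.1 hi))).trans (Nat.floor_le hs)
    simp [T, max_eq_left (sub_nonneg.2 hi)]
  have hT_floor (i : ℕ) (hi : ⌊s⌋₊ + 1 ≤ i) : T i = 0 := by
    have : s - i ≤ 0 := by linarith [Nat.lt_of_floor_lt (Nat.lt_of_succ_le hi)]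
    simp [T, max_eq_right this, hd]
  have hT_choose (i : ℕ) (hi : d + 1 ≤ i) : T i = 0 := by
    simp [T, choose_eq_zero_of_lt (Nat.lt_of_succ_le hi)]
  rw [hE, irwinHall, ← eventually_constant_sum hT_floor (le_max_left _ (d + 1)),
    ← eventually_constant_sum hT_choose (le_max_right (⌊s⌋₊ + 1) _)]

theorem E_zero (s : ℝ) : E 0 s = 1 := by
  rw [E, sum_eq_single 0] <;> simp +contextual [choose_eq_zero_of_lt, Nat.pos_iff_ne_zero]

theorem E_lipschitz (d : ℕ) :
    ∀ s s' : ℝ, 0 < s → 0 < s' → |E d s - E d s'| ≤ |s - s'| := by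
  intro s s' hs hs'
  rcases eq_or_ne d 0 with rfl | hd
  · simp [E_zero]
  · obtain ⟨hmono, hmono_sub⟩ := monotone_irwinHall_and_monotone_id_sub hd
    rw [E_eq_irwinHall hd hs.le, E_eq_irwinHall hd hs'.le]
    exact abs_sub_le_of_monotone_of_monotone_id_sub hmono hmono_sub s s'
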